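/- Let Π be a nonempty S_C-invariant family of probability measures on Δ_C with finite first moments and F(p) = sup_{ℙ∈Π} E_{p'∼ℙ}[‖p' - p‖]. Then the uniform distribution attains the minimax: F(uniform) = inf_{p∈Δ_C} F(p). -/

import Mathlib

/-!
Averaging the cyclic shifts of any `p ∈ Δ_C` gives the uniform point `u`. For each `ℙ ∈ Π` the
map `q ↦ ∫ ‖x - q‖ dℙ` is convex, so its value at `u` is at most the average of its values at the
shifts of `p`; by permutation invariance of `Π` (and of the norm) each of these is an integral
against another member of `Π`, hence at most `F p`. Since every `ℙ ∈ Π` lives on the simplex,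
where `‖x‖ ≤ 1`, these integrals are bounded by `1 + ‖q‖`, so the supremum defining `F` is finite.
-/

open MeasureTheory

def simplex (C : ℕ) : Set (EuclideanSpace ℝ (Fin C)) :=
  {p | (∀ i, 0 ≤ p i) ∧ ∑ i, p i = 1}

def permAct (C : ℕ) (σ : Equiv.Perm (Fin C)) (p : EuclideanSpace ℝ (Fin C)) :
    EuclideanSpace ℝ (Fin C) :=
  WithLp.toLp 2 (fun c => p (σ⁻¹ c))

open Set

theorem permAct_eq_piLpCongrLeft (C : ℕ) (σ : Equiv.Perm (Fin C)) :
    permAct C σ = LinearIsometryEquiv.piLpCongrLeft 2 ℝ ℝ σ := by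
  funext p
  ext c
  simp [permAct, Equiv.piCongrLeft', Equiv.Perm.inv_def]

section NormSub

variable {E : Type*} [NormedAddCommGroup E] [NormedSpace ℝ E] [MeasurableSpace E]

theorem convexOn_integral_norm_sub {μ : Measure E} (hμ : ∀ q, Integrable (fun x => ‖x - q‖) μ) :
    ConvexOn ℝ univ fun q => ∫ x, ‖x - q‖ ∂μ := by
  refine ⟨convex_univ, fun q₁ _ q₂ _ a b ha hb hab => ?_⟩
  calc ∫ x, ‖x - (a • q₁ + b • q₂)‖ ∂μ ≤ ∫ x, a * ‖x - q₁‖ + b * ‖x - q₂‖ ∂μ := by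
        refine integral_mono (hμ _) (((hμ q₁).const_mul a).add ((hμ q₂).const_mul b)) fun x => ?_
        have hx : x - (a • q₁ + b • q₂) = a • (x - q₁) + b • (x - q₂) := by
          conv_lhs => rw [← one_smul ℝ x, ← hab]
          module
        simpa only [hx, smul_eq_mul] using convexOn_univ_norm.2 (mem_univ _) (mem_univ _) ha hb hab
    _ = a • ∫ x, ‖x - q₁‖ ∂μ + b • ∫ x, ‖x - q₂‖ ∂μ := by
        rw [integral_add ((hμ q₁).const_mul a) ((hμ q₂).const_mul b), integral_const_mul,
          integral_const_mul, smul_eq_mul, smul_eq_mul]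

theorem integral_norm_sub_map_symm [BorelSpace E] (e : E ≃ₗᵢ[ℝ] E) (μ : Measure E) (q : E) :
    ∫ y, ‖y - q‖ ∂μ.map e.symm = ∫ x, ‖x - e q‖ ∂μ := by
  rw [integral_map e.symm.continuous.aemeasurable
    (by fun_prop : Continuous fun y => ‖y - q‖).aestronglyMeasurable]
  congr 1 with x
  rw [← e.norm_map, map_sub, e.apply_symm_apply]

end NormSub

section BoundedSupport

variable {E : Type*} [NormedAddCommGroup E] [MeasurableSpace E] {P : Measure E} {R : ℝ}

theorem ae_norm_sub_le_of_ae_norm_le (hP : ∀ᵐ x ∂P, ‖x‖ ≤ R) (q : E) :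
    ∀ᵐ x ∂P, ‖‖x - q‖‖ ≤ R + ‖q‖ :=
  hP.mono fun x hx => by rw [norm_norm]; linarith [norm_sub_le x q]

theorem integrable_norm_sub_of_ae_norm_le [OpensMeasurableSpace E] [IsProbabilityMeasure P]
    (hP : ∀ᵐ x ∂P, ‖x‖ ≤ R) (q : E) : Integrable (fun x => ‖x - q‖) P :=
  .of_bound (by fun_prop : Continuous fun x => ‖x - q‖).aestronglyMeasurable _
    (ae_norm_sub_le_of_ae_norm_le hP q)

theorem integral_norm_sub_le_of_ae_norm_le [IsProbabilityMeasure P] (hP : ∀ᵐ x ∂P, ‖x‖ ≤ R)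
    (q : E) : ∫ x, ‖x - q‖ ∂P ≤ R + ‖q‖ := by
  simpa using (le_abs_self _).trans
    (norm_integral_le_of_norm_le_const (ae_norm_sub_le_of_ae_norm_le hP q))

end BoundedSupport

theorem norm_le_one_of_mem_simplex {C : ℕ} {p : EuclideanSpace ℝ (Fin C)} (hp : p ∈ simplex C) :
    ‖p‖ ≤ 1 := by
  have hle : ∀ i, p i ≤ 1 := fun i =>
    hp.2 ▸ Finset.single_le_sum (fun j _ => hp.1 j) (Finset.mem_univ i)
  refine (sq_le_one_iff₀ (norm_nonneg p)).1 ?_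
  rw [EuclideanSpace.norm_sq_eq, ← hp.2]
  refine Finset.sum_le_sum fun i _ => ?_
  rw [Real.norm_eq_abs, sq_abs]
  nlinarith [hp.1 i, hle i]

theorem sum_permAct_addLeft_apply {C : ℕ} [NeZero C] (p : EuclideanSpace ℝ (Fin C)) (c : Fin C) :
    (∑ k : Fin C, permAct C (Equiv.addLeft k) p) c = ∑ i, p i := by
  rw [WithLp.ofLp_sum, Finset.sum_apply]
  exact Fintype.sum_equiv (Equiv.subLeft c) _ _ fun k => by
    simp [permAct, Equiv.Perm.inv_def, neg_add_eq_sub]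

theorem sum_smul_permAct_addLeft_eq {C : ℕ} [NeZero C] {p u : EuclideanSpace ℝ (Fin C)}
    (hp : ∑ i, p i = 1) (hu : ∀ c, u c = 1 / C) :
    ∑ k : Fin C, (C : ℝ)⁻¹ • permAct C (Equiv.addLeft k) p = u := by
  ext c
  rw [← Finset.smul_sum, PiLp.smul_apply, sum_permAct_addLeft_apply, hp, hu, smul_eq_mul, mul_one,
    one_div]

theorem mem_simplex_of_forall_eq {C : ℕ} [NeZero C] {u : EuclideanSpace ℝ (Fin C)}
    (hu : ∀ c, u c = 1 / C) : u ∈ simplex C := by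
  refine ⟨fun c => by rw [hu]; positivity, ?_⟩
  simp [hu]

theorem integral_norm_sub_permAct {C : ℕ} (σ : Equiv.Perm (Fin C))
    (P : Measure (EuclideanSpace ℝ (Fin C))) (p : EuclideanSpace ℝ (Fin C)) :
    ∫ x, ‖x - permAct C σ p‖ ∂P = ∫ y, ‖y - p‖ ∂P.map (permAct C σ⁻¹) := by
  rw [permAct_eq_piLpCongrLeft, permAct_eq_piLpCongrLeft, Equiv.Perm.inv_def,
    ← LinearIsometryEquiv.piLpCongrLeft_symm, integral_norm_sub_map_symm]

theorem integral_norm_sub_le_of_forall_permAct {C : ℕ} [NeZero C]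
    {P : Measure (EuclideanSpace ℝ (Fin C))} (hP : ∀ q, Integrable (fun x => ‖x - q‖) P)
    {p u : EuclideanSpace ℝ (Fin C)} (hp : ∑ i, p i = 1) (hu : ∀ c, u c = 1 / C) {M : ℝ}
    (hM : ∀ σ : Equiv.Perm (Fin C), ∫ x, ‖x - permAct C σ p‖ ∂P ≤ M) :
    ∫ x, ‖x - u‖ ∂P ≤ M := by
  rw [← sum_smul_permAct_addLeft_eq hp hu]
  calc ∫ x, ‖x - ∑ k : Fin C, (C : ℝ)⁻¹ • permAct C (Equiv.addLeft k) p‖ ∂P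
      ≤ ∑ k : Fin C, (C : ℝ)⁻¹ • ∫ x, ‖x - permAct C (Equiv.addLeft k) p‖ ∂P :=
        (convexOn_integral_norm_sub hP).map_sum_le (fun _ _ => by positivity) (by simp)
          (fun _ _ => mem_univ _)
    _ ≤ ∑ _k : Fin C, (C : ℝ)⁻¹ • M := by gcongr; exact hM _
    _ = M := by
      rw [Finset.sum_const, Finset.card_univ, Fintype.card_fin, nsmul_eq_mul, smul_eq_mul,
        mul_inv_cancel_left₀ (Nat.cast_ne_zero.2 (NeZero.ne C))]

theorem uniform_attains_minimax_general (C : ℕ) (hC : 1 ≤ C)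
    (Pi : Set (Measure (EuclideanSpace ℝ (Fin C))))
    (hprob : ∀ P ∈ Pi, IsProbabilityMeasure P)
    (hsupp : ∀ P ∈ Pi, P (simplex C)ᶜ = 0)
    (hinv : ∀ P ∈ Pi, ∀ σ : Equiv.Perm (Fin C), Measure.map (permAct C σ) P ∈ Pi)
    (F : EuclideanSpace ℝ (Fin C) → ℝ)
    (hF : ∀ p, F p = sSup {x | ∃ P ∈ Pi, x = ∫ p', ‖p' - p‖ ∂P})
    (u : EuclideanSpace ℝ (Fin C)) (hu : ∀ c, u c = 1 / C) :
    F u = sInf (F '' simplex C) := by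
  have : NeZero C := ⟨by omega⟩
  have norm_le_one : ∀ P ∈ Pi, ∀ᵐ x ∂P, ‖x‖ ≤ 1 := fun P hP =>
    (ae_iff.2 (hsupp P hP)).mono fun _ => norm_le_one_of_mem_simplex
  have integral_le_F : ∀ P ∈ Pi, ∀ q, ∫ x, ‖x - q‖ ∂P ≤ F q := by
    intro P hP q
    rw [hF q]
    refine le_csSup ⟨1 + ‖q‖, ?_⟩ ⟨P, hP, rfl⟩
    rintro _ ⟨Q, hQ, rfl⟩
    have := hprob Q hQ
    exact integral_norm_sub_le_of_ae_norm_le (norm_le_one Q hQ) q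
  have F_uniform_le : ∀ p ∈ simplex C, F u ≤ F p := by
    intro p hp
    rw [hF u]
    refine Real.sSup_le ?_ ((hF p).symm ▸ Real.sSup_nonneg (by rintro _ ⟨P, -, rfl⟩; positivity))
    rintro _ ⟨P, hP, rfl⟩
    have := hprob P hP
    refine integral_norm_sub_le_of_forall_permAct
      (integrable_norm_sub_of_ae_norm_le (norm_le_one P hP)) hp.2 hu fun σ => ?_
    rw [integral_norm_sub_permAct]
    exact integral_le_F _ (hinv P hP σ⁻¹) p
  exact (IsLeast.csInf_eq ⟨mem_image_of_mem F (mem_simplex_of_forall_eq hu),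
    forall_mem_image.2 F_uniform_le⟩).symm

theorem uniform_attains_minimax (C : ℕ) (hC : 1 ≤ C)
    (Pi : Set (Measure (EuclideanSpace ℝ (Fin C)))) (hne : Pi.Nonempty)
    (hprob : ∀ P ∈ Pi, IsProbabilityMeasure P)
    (hsupp : ∀ P ∈ Pi, P (simplex C)ᶜ = 0)
    (hmom : ∀ P ∈ Pi, Integrable (fun p' => ‖p'‖) P)
    (hinv : ∀ P ∈ Pi, ∀ σ : Equiv.Perm (Fin C), Measure.map (permAct C σ) P ∈ Pi)
    (F : EuclideanSpace ℝ (Fin C) → ℝ)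
    (hF : ∀ p, F p = sSup {x | ∃ P ∈ Pi, x = ∫ p', ‖p' - p‖ ∂P})
    (u : EuclideanSpace ℝ (Fin C)) (hu : ∀ c, u c = 1 / C) :
    F u = sInf (F '' simplex C) :=
  uniform_attains_minimax_general C hC Pi hprob hsupp hinv F hF u hu
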